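/- Twisted two-variable Rogers–Ramanujan variation (Theorem 5.6): for all complex q, x with 0 < |q| < 1 and |x| > 1, one has (x^{−2};q²)·∑_{n∈ℤ} q^{n²} x^{2n} (−q^{2n+1}; q²) = ∑_{n∈ℤ} q^{n²} x^{2n} and (x^{−2};q²)·∑_{n∈ℤ} q^{n²+n} x^{2n+1} (−q^{2n+2}; q²) = ∑_{n∈ℤ} q^{n²+n} x^{2n+1}, where (−q^m; q²) := ∏_{k=0}^{∞}(1 + q^{m+2k}) for m ∈ ℤ; both twisted bilateral series converge absolutely when |x| > 1. -/

import Mathlib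

open scoped BigOperators

noncomputable section

/-- `(a; q) := ∏_{n=0}^∞ (1 - qⁿ a)`. -/
def qPoch (q a : ℂ) : ℂ := ∏' n : ℕ, (1 - q ^ n * a)

/-- `(−q^m; q²) := ∏_{k=0}^∞ (1 + q^{m+2k})` for `m : ℤ`. -/
def qPochNegShift2 (q : ℂ) (m : ℤ) : ℂ := ∏' k : ℕ, (1 + q ^ (m + 2 * (k : ℤ)))

/-!
Put `Q = q²`, `z = x⁻²` and `u m = thetaTerm q x b m = q^(m² + b m) x^(2m + b)` for `b = 0, 1`.
Euler's identity `∏ₖ (1 + w Qᵏ) = ∑ⱼ Q^(j(j-1)/2) wʲ / (Q;Q)ⱼ` at `w = q^(2n+1+b)` turns the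
`n`-th twisted term into `∑ⱼ u (n + j) zʲ / (Q;Q)ⱼ`. Shearing the absolutely convergent double sum
factors it as `(∑ₘ u m) · ∑ⱼ zʲ / (Q;Q)ⱼ`, and Euler's other identity
`(z;Q)_∞ · ∑ⱼ zʲ / (Q;Q)ⱼ = 1` (this is where `|z| < 1` is needed) finishes the proof.

Both Euler identities come from `q`-difference equations, `S w = (1 + w) S (Q w)` and
`G (Q z) = (1 - z) G z`: iterating them and letting `Qⁿ w → 0` in the continuous series gives
the infinite products.
-/

open Filter Finset Topology

section SeriesTools

theorem summable_norm_of_succ_eq_mul {R : Type*} [SeminormedRing R] {a c : ℕ → R}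
    (h : ∀ j, a (j + 1) = a j * c j) {l : ℝ} (hl : l < 1)
    (hc : Tendsto (fun j => ‖c j‖) atTop (𝓝 l)) : Summable fun j => ‖a j‖ := by
  refine summable_of_ratio_norm_eventually_le (r := (l + 1) / 2) (by linarith) ?_
  filter_upwards [hc.eventually_le_const (show l < (l + 1) / 2 by linarith)] with j hj
  rw [norm_norm, norm_norm, h, mul_comm ((l + 1) / 2)]
  exact (norm_mul_le _ _).trans (by gcongr)

theorem tendsto_tsum_mul_pow_pow {𝕜 : Type*} [NormedField 𝕜] [CompleteSpace 𝕜] {a : ℕ → 𝕜}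
    {Q : 𝕜} (ha : Summable fun j => ‖a j‖) (hQ : ‖Q‖ < 1) :
    Tendsto (fun n => ∑' j, a j * (Q ^ n) ^ j) atTop (𝓝 (a 0)) := by
  have hlim : (∑' j, if j = 0 then a 0 else 0) = a 0 := tsum_ite_eq 0 fun _ => a 0
  rw [← hlim]
  refine tendsto_tsum_of_dominated_convergence ha (fun j => ?_) (.of_forall fun n j => ?_)
  · rcases j with _ | j
    · simp
    · have hQj : ‖Q ^ (j + 1)‖ < 1 := by
        rw [norm_pow]; exact pow_lt_one₀ (norm_nonneg _) hQ j.succ_ne_zero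
      simpa [← pow_mul, mul_comm (j + 1)] using
        (tendsto_pow_atTop_nhds_zero_of_norm_lt_one hQj).const_mul (a (j + 1))
  · rw [norm_mul, norm_pow, norm_pow]
    exact mul_le_of_le_one_right (norm_nonneg _)
      (pow_le_one₀ (by positivity) (pow_le_one₀ (norm_nonneg _) hQ.le))

theorem tsum_eq_tsum_add_mul_tsum {R : Type*} [Ring R] [TopologicalSpace R] [IsTopologicalRing R]
    [T2Space R] {t s r : ℕ → R} {c : R} (hs : Summable s) (hr : Summable r) (h0 : t 0 = s 0)
    (hsucc : ∀ j, t (j + 1) = s (j + 1) + c * r j) :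
    ∑' j, t j = ∑' j, s j + c * ∑' j, r j := by
  have hs' : Summable fun j => s (j + 1) := (summable_nat_add_iff 1).2 hs
  have ht : Summable t :=
    (summable_nat_add_iff 1).1 ((hs'.add (hr.mul_left c)).congr fun j => (hsucc j).symm)
  rw [ht.tsum_eq_zero_add, hs.tsum_eq_zero_add, tsum_congr hsucc, hs'.tsum_add (hr.mul_left c),
    hr.tsum_mul_left, h0, add_assoc]

theorem tsum_tsum_add_mul_eq_tsum_mul_tsum {R : Type*} [NormedRing R] [CompleteSpace R]
    {u : ℤ → R} {v : ℕ → R} (hu : Summable fun m => ‖u m‖) (hv : Summable fun j => ‖v j‖) :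
    ∑' n : ℤ, ∑' j : ℕ, u (n + j) * v j = (∑' m, u m) * ∑' j, v j := by
  let shear : ℤ × ℕ ≃ ℤ × ℕ :=
    { toFun := fun p => (p.1 + p.2, p.2)
      invFun := fun p => (p.1 - p.2, p.2)
      left_inv := fun p => by simp
      right_inv := fun p => by simp }
  have hprod := summable_mul_of_summable_norm hu hv
  calc ∑' n : ℤ, ∑' j : ℕ, u (n + j) * v j
      = ∑' p : ℤ × ℕ, u (shear p).1 * v (shear p).2 :=
        ((shear.summable_iff.2 hprod).tsum_prod).symm
    _ = ∑' p : ℤ × ℕ, u p.1 * v p.2 := shear.tsum_eq fun p => u p.1 * v p.2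
    _ = _ := (tsum_mul_tsum_of_summable_norm hu hv).symm

end SeriesTools

section QPochhammer

variable {Q : ℂ}

def qPochFin (Q a : ℂ) (n : ℕ) : ℂ := ∏ k ∈ range n, (1 - Q ^ k * a)

theorem qPochFin_zero (a : ℂ) : qPochFin Q a 0 = 1 := prod_range_zero _

theorem qPochFin_succ (a : ℂ) (n : ℕ) :
    qPochFin Q a (n + 1) = qPochFin Q a n * (1 - Q ^ n * a) := prod_range_succ _ _

theorem one_sub_pow_mul_self_ne_zero (hQ : ‖Q‖ < 1) (k : ℕ) : 1 - Q ^ k * Q ≠ 0 := by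
  rw [sub_ne_zero, ne_comm, ← pow_succ]
  refine ne_of_apply_ne norm (ne_of_lt ?_)
  rw [norm_pow, norm_one]
  exact pow_lt_one₀ (norm_nonneg _) hQ k.succ_ne_zero

theorem qPochFin_self_ne_zero (hQ : ‖Q‖ < 1) (n : ℕ) : qPochFin Q Q n ≠ 0 :=
  prod_ne_zero_iff.2 fun k _ => one_sub_pow_mul_self_ne_zero hQ k

theorem tendsto_qPochFin (hQ : ‖Q‖ < 1) (a : ℂ) :
    Tendsto (qPochFin Q a) atTop (𝓝 (qPoch Q a)) := by
  have hsum : Summable fun k => ‖-(Q ^ k * a)‖ := by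
    simpa [norm_mul, norm_pow] using (summable_geometric_of_lt_one (norm_nonneg _) hQ).mul_right ‖a‖
  simp only [qPoch, sub_eq_add_neg]
  exact (multipliable_one_add_of_summable hsum).hasProd.tendsto_prod_nat

theorem tendsto_one_sub_pow_mul_self (hQ : ‖Q‖ < 1) :
    Tendsto (fun j : ℕ => 1 - Q ^ j * Q) atTop (𝓝 1) := by
  simpa using tendsto_const_nhds.sub
    ((tendsto_pow_atTop_nhds_zero_of_norm_lt_one hQ).mul_const Q)

theorem summable_norm_pow_div_qPochFin (hQ : ‖Q‖ < 1) {z : ℂ} (hz : ‖z‖ < 1) :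
    Summable fun j => ‖z ^ j / qPochFin Q Q j‖ := by
  refine summable_norm_of_succ_eq_mul (c := fun j => z / (1 - Q ^ j * Q)) (fun j => ?_) hz ?_
  · rw [qPochFin_succ, pow_succ, div_mul_div_comm]
  · simpa using (tendsto_const_nhds.div (tendsto_one_sub_pow_mul_self hQ) one_ne_zero).norm

theorem summable_norm_pow_choose_two_mul_pow_div_qPochFin (hQ : ‖Q‖ < 1) (w : ℂ) :
    Summable fun j => ‖Q ^ j.choose 2 * w ^ j / qPochFin Q Q j‖ := by
  refine summable_norm_of_succ_eq_mul (c := fun j => Q ^ j * w / (1 - Q ^ j * Q)) (fun j => ?_)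
    zero_lt_one ?_
  · rw [qPochFin_succ, Nat.choose_succ_succ, Nat.choose_one_right, pow_add, pow_succ,
      div_mul_div_comm]
    ring
  · simpa using (((tendsto_pow_atTop_nhds_zero_of_norm_lt_one hQ).mul_const w).div
      (tendsto_one_sub_pow_mul_self hQ) one_ne_zero).norm

theorem qPoch_mul_tsum_pow_div_qPochFin (hQ : ‖Q‖ < 1) {z : ℂ} (hz : ‖z‖ < 1) :
    qPoch Q z * ∑' j, z ^ j / qPochFin Q Q j = 1 := by
  set G : ℂ → ℂ := fun v => ∑' j, v ^ j / qPochFin Q Q j with hG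
  have hshift : ∀ v : ℂ, ‖v‖ < 1 → G (Q * v) = (1 - v) * G v := by
    intro v hv
    have hQv : ‖Q * v‖ < 1 := by
      rw [norm_mul]; exact mul_lt_one_of_nonneg_of_lt_one_right hQ.le (norm_nonneg _) hv
    have := tsum_eq_tsum_add_mul_tsum (t := fun j => v ^ j / qPochFin Q Q j) (c := v)
      (summable_norm_pow_div_qPochFin hQ hQv).of_norm (summable_norm_pow_div_qPochFin hQ hv).of_norm
      (by simp) (fun j => ?_)
    · rw [hG]; linear_combination -this
    · have h1 := qPochFin_self_ne_zero hQ j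
      have h2 := one_sub_pow_mul_self_ne_zero hQ j
      rw [qPochFin_succ]
      field_simp
      ring
  have hiter : ∀ n, G (Q ^ n * z) = qPochFin Q z n * G z := by
    intro n
    induction n with
    | zero => simp [qPochFin_zero]
    | succ n ih =>
      have hn : ‖Q ^ n * z‖ < 1 := by
        rw [norm_mul, norm_pow]
        exact mul_lt_one_of_nonneg_of_lt_one_right (pow_le_one₀ (norm_nonneg _) hQ.le)
          (norm_nonneg _) hz
      rw [pow_succ', mul_assoc, hshift _ hn, ih, qPochFin_succ]
      ring
  have hone : Tendsto (fun n => G (Q ^ n * z)) atTop (𝓝 1) := by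
    have := tendsto_tsum_mul_pow_pow (summable_norm_pow_div_qPochFin hQ hz) hQ
    simp only [pow_zero, qPochFin_zero, div_one] at this
    refine this.congr fun n => tsum_congr fun j => ?_
    ring
  refine tendsto_nhds_unique ?_ hone
  simpa only [hiter] using (tendsto_qPochFin hQ z).mul_const (G z)

theorem tprod_one_add_mul_pow (hQ : ‖Q‖ < 1) (w : ℂ) :
    ∏' k, (1 + w * Q ^ k) = ∑' j, Q ^ j.choose 2 * w ^ j / qPochFin Q Q j := by
  set S : ℂ → ℂ := fun v => ∑' j, Q ^ j.choose 2 * v ^ j / qPochFin Q Q j with hS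
  have hshift : ∀ v : ℂ, S v = (1 + v) * S (Q * v) := by
    intro v
    have hsum := (summable_norm_pow_choose_two_mul_pow_div_qPochFin hQ (Q * v)).of_norm
    have := tsum_eq_tsum_add_mul_tsum
      (t := fun j => Q ^ j.choose 2 * v ^ j / qPochFin Q Q j) (c := v) hsum hsum
      (by simp) (fun j => ?_)
    · rw [hS]; linear_combination this
    · have h1 := qPochFin_self_ne_zero hQ j
      have h2 := one_sub_pow_mul_self_ne_zero hQ j
      rw [qPochFin_succ, Nat.choose_succ_succ, Nat.choose_one_right, pow_add]
      field_simp
      ring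
  have hiter : ∀ n, S w = (∏ k ∈ range n, (1 + w * Q ^ k)) * S (Q ^ n * w) := by
    intro n
    induction n with
    | zero => simp
    | succ n ih =>
      rw [ih, hshift (Q ^ n * w), prod_range_succ, pow_succ', mul_assoc Q]
      ring
  have hone : Tendsto (fun n => S (Q ^ n * w)) atTop (𝓝 1) := by
    have := tendsto_tsum_mul_pow_pow (summable_norm_pow_choose_two_mul_pow_div_qPochFin hQ w) hQ
    simp only [Nat.choose_zero_succ, pow_zero, qPochFin_zero, div_one, mul_one] at this
    refine this.congr fun n => tsum_congr fun j => ?_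
    ring
  have hprod : Multipliable fun k => 1 + w * Q ^ k :=
    multipliable_one_add_of_summable (by
      simpa [norm_mul, norm_pow] using
        (summable_geometric_of_lt_one (norm_nonneg _) hQ).mul_left ‖w‖)
  have hlim := hprod.hasProd.tendsto_prod_nat.mul hone
  simp only [← hiter, mul_one] at hlim
  exact tendsto_nhds_unique hlim tendsto_const_nhds

end QPochhammer

theorem two_mul_choose_two_add_self (j : ℕ) : 2 * j.choose 2 + j = j * j := by
  induction j with
  | zero => rfl
  | succ j ih => rw [Nat.choose_succ_succ, Nat.choose_one_right]; linarith

section Theta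

variable {q x : ℂ}

theorem norm_sq_lt_one (hq : ‖q‖ < 1) : ‖q ^ 2‖ < 1 := by
  rw [norm_pow]; exact pow_lt_one₀ (norm_nonneg _) hq two_ne_zero

def thetaTerm (q x : ℂ) (b m : ℤ) : ℂ := q ^ (m ^ 2 + b * m) * x ^ (2 * m + b)

theorem thetaTerm_neg (q x : ℂ) (b m : ℤ) : thetaTerm q x b (-m) = thetaTerm q x⁻¹ (-b) m := by
  rw [thetaTerm, thetaTerm, inv_zpow']
  congr 2 <;> ring

theorem thetaTerm_succ (hq : q ≠ 0) (hx : x ≠ 0) (b : ℤ) (m : ℕ) :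
    thetaTerm q x b (m + 1) = thetaTerm q x b m * ((q ^ 2) ^ m * (q ^ (1 + b) * x ^ 2)) := by
  have hqpow : q ^ ((m + 1 : ℤ) ^ 2 + b * (m + 1)) =
      q ^ (m ^ 2 + b * m : ℤ) * (q ^ 2) ^ m * q ^ (1 + b) := by
    rw [← pow_mul, ← zpow_natCast, ← zpow_add₀ hq, ← zpow_add₀ hq]
    congr 1; push_cast; ring
  have hxpow : x ^ (2 * (m + 1 : ℤ) + b) = x ^ (2 * m + b : ℤ) * x ^ 2 := by
    rw [← zpow_natCast, ← zpow_add₀ hx]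
    congr 1; push_cast; ring
  rw [thetaTerm, thetaTerm, hqpow, hxpow]
  ring

theorem summable_norm_thetaTerm_nat (hq1 : ‖q‖ < 1) (hq : q ≠ 0) (hx : x ≠ 0) (b : ℤ) :
    Summable fun m : ℕ => ‖thetaTerm q x b m‖ := by
  refine summable_norm_of_succ_eq_mul (fun m => by exact_mod_cast thetaTerm_succ hq hx b m)
    zero_lt_one ?_
  simpa only [zero_mul, norm_zero] using ((tendsto_pow_atTop_nhds_zero_of_norm_lt_one
    (norm_sq_lt_one hq1)).mul_const (q ^ (1 + b) * x ^ 2)).norm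

theorem summable_norm_thetaTerm (hq1 : ‖q‖ < 1) (hq : q ≠ 0) (hx : x ≠ 0) (b : ℤ) :
    Summable fun m : ℤ => ‖thetaTerm q x b m‖ :=
  .of_nat_of_neg (summable_norm_thetaTerm_nat hq1 hq hx b) (by
    simpa only [thetaTerm_neg] using summable_norm_thetaTerm_nat hq1 hq (inv_ne_zero hx) (-b))

theorem qPochNegShift2_eq_tprod (hq : q ≠ 0) (m : ℤ) :
    qPochNegShift2 q m = ∏' k : ℕ, (1 + q ^ m * (q ^ 2) ^ k) := by
  refine tprod_congr fun k => ?_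
  rw [← pow_mul, ← zpow_natCast, ← zpow_add₀ hq]
  push_cast
  rfl

theorem thetaTerm_mul_qPochNegShift2 (hq1 : ‖q‖ < 1) (hq : q ≠ 0) (hx : x ≠ 0) (b n : ℤ) :
    thetaTerm q x b n * qPochNegShift2 q (2 * n + 1 + b) =
      ∑' j : ℕ, thetaTerm q x b (n + j) * ((x ^ (-2 : ℤ)) ^ j / qPochFin (q ^ 2) (q ^ 2) j) := by
  have hq2 := norm_sq_lt_one hq1
  rw [qPochNegShift2_eq_tprod hq, tprod_one_add_mul_pow hq2, ← tsum_mul_left]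
  refine tsum_congr fun j => ?_
  have hC : (2 * j.choose 2 + j : ℤ) = j * j := by exact_mod_cast two_mul_choose_two_add_self j
  have hqj : q ^ ((n + j) ^ 2 + b * (n + j)) =
      q ^ (n ^ 2 + b * n) * ((q ^ 2) ^ j.choose 2 * (q ^ (2 * n + 1 + b)) ^ j) := by
    rw [← pow_mul, ← zpow_natCast, ← zpow_natCast, ← zpow_mul, ← zpow_add₀ hq, ← zpow_add₀ hq]
    congr 1; push_cast; linear_combination -hC
  have hxj : x ^ (2 * (n + j) + b) * (x ^ (-2 : ℤ)) ^ j = x ^ (2 * n + b) := by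
    rw [← zpow_natCast, ← zpow_mul, ← zpow_add₀ hx]
    congr 1; ring
  rw [thetaTerm, thetaTerm, hqj, ← hxj]
  ring

theorem qPoch_mul_tsum_thetaTerm_mul_qPochNegShift2 (hq1 : ‖q‖ < 1) (hq : q ≠ 0)
    (hx : 1 < ‖x‖) (b : ℤ) :
    qPoch (q ^ 2) (x ^ (-2 : ℤ)) * ∑' n : ℤ, thetaTerm q x b n * qPochNegShift2 q (2 * n + 1 + b) =
      ∑' n : ℤ, thetaTerm q x b n := by
  have hx0 : x ≠ 0 := norm_pos_iff.1 (one_pos.trans hx)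
  have hq2 := norm_sq_lt_one hq1
  have hz : ‖x ^ (-2 : ℤ)‖ < 1 := by
    rw [norm_zpow]; exact zpow_lt_one_of_neg₀ hx (by norm_num)
  rw [tsum_congr (thetaTerm_mul_qPochNegShift2 hq1 hq hx0 b),
    tsum_tsum_add_mul_eq_tsum_mul_tsum (summable_norm_thetaTerm hq1 hq hx0 b)
      (summable_norm_pow_div_qPochFin hq2 hz),
    mul_left_comm, qPoch_mul_tsum_pow_div_qPochFin hq2 hz, mul_one]

end Theta

/-- Twisted two-variable Rogers–Ramanujan variation (Theorem 5.6). -/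
theorem twisted_two_var_rogers_ramanujan_variation (q x : ℂ) (hq0 : 0 < ‖q‖)
    (hq1 : ‖q‖ < 1) (hx : 1 < ‖x‖) :
    qPoch (q ^ 2) (x ^ (-2 : ℤ)) *
        (∑' n : ℤ, q ^ (n ^ 2) * x ^ (2 * n) * qPochNegShift2 q (2 * n + 1)) =
      (∑' n : ℤ, q ^ (n ^ 2) * x ^ (2 * n)) ∧
    qPoch (q ^ 2) (x ^ (-2 : ℤ)) *
        (∑' n : ℤ, q ^ (n ^ 2 + n) * x ^ (2 * n + 1) * qPochNegShift2 q (2 * n + 2)) =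
      ∑' n : ℤ, q ^ (n ^ 2 + n) * x ^ (2 * n + 1) := by
  have hq : q ≠ 0 := norm_pos_iff.1 hq0
  constructor
  · simpa [thetaTerm] using qPoch_mul_tsum_thetaTerm_mul_qPochNegShift2 hq1 hq hx 0
  · simpa [thetaTerm, add_assoc, one_add_one_eq_two] using
      qPoch_mul_tsum_thetaTerm_mul_qPochNegShift2 hq1 hq hx 1

end
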